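/- Let i be odd with N_{i+1} = N (the minimal absolute value of a negative norm in ℤ[√D]). Then there exists r with 0 ≤ r ≤ u_{i+2} and an integer a with |a| ≤ N/2 such that N(α_{i,r}) = (D − a²)/N. -/

import Mathlib

open Real

/-!
With `α_j = p_j + q_j √D`, `ᾱ_j = p_j - q_j √D`, `B = p_i p_{i+1} - D q_i q_{i+1}` and
`α_{i+1} ᾱ_{i+1} = -N`, the identity `p_i q_{i+1} - p_{i+1} q_i = 1` (for odd `i`) gives
`(α_i + r α_{i+1}) ᾱ_{i+1} = B - rN - √D`, and taking norms, `-N · N(α_{i,r}) = (B - rN)² - D`.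
So `a = B - rN` works for `r` the integer nearest to `B / N`, which lies in `[0, u_{i+2}]` because
`0 < B < u_{i+2} N`. These bounds come from adding `B + √D - rN = (c_{i+2} - r) N` (a consequence
of `c_{i+2} ᾱ_{i+1} = -ᾱ_i`) and `B - √D - rN = (α_i + r α_{i+1}) ᾱ_{i+1}` for `r = 0` and
`r = u_{i+2}`, using `1 < c_{i+2} < u_{i+2} + 1` and `ᾱ_{i+1} < 0 < α_i < α_{i+1} < α_{i+2}`.
-/

structure IsCompleteQuotients (ξ : ℝ) (u : ℤ → ℤ) (c : ℤ → ℝ) : Prop where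
  zero : c 0 = ξ
  partial_eq_floor : ∀ i, 0 ≤ i → u i = ⌊c i⌋
  succ : ∀ i, 0 ≤ i → c (i + 1) = 1 / (c i - u i)

structure IsConvergents (u p q : ℤ → ℤ) : Prop where
  num_neg_one : p (-1) = 1
  den_neg_one : q (-1) = 0
  num_zero : p 0 = u 0
  den_zero : q 0 = 1
  num_succ : ∀ i, 0 ≤ i → p (i + 1) = u (i + 1) * p i + p (i - 1)
  den_succ : ∀ i, 0 ≤ i → q (i + 1) = u (i + 1) * q i + q (i - 1)

namespace IsCompleteQuotients

variable {ξ : ℝ} {u : ℤ → ℤ} {c : ℤ → ℝ} {j : ℤ}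

theorem sub_eq_fract (h : IsCompleteQuotients ξ u c) (hj : 0 ≤ j) :
    c j - u j = Int.fract (c j) := by
  rw [h.partial_eq_floor j hj, Int.self_sub_floor]

theorem irrational (h : IsCompleteQuotients ξ u c) (hξ : Irrational ξ) :
    ∀ j, 0 ≤ j → Irrational (c j) := by
  refine Int.leInduction (by rwa [h.zero]) fun j hj ih => ?_
  rw [h.succ j hj, h.partial_eq_floor j hj, one_div]
  exact (ih.sub_intCast _).inv

theorem sub_pos (h : IsCompleteQuotients ξ u c) (hξ : Irrational ξ) (hj : 0 ≤ j) :
    0 < c j - u j := by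
  rw [h.sub_eq_fract hj, Int.fract_pos]
  exact (h.irrational hξ j hj).ne_int _

theorem sub_lt_one (h : IsCompleteQuotients ξ u c) (hj : 0 ≤ j) : c j - u j < 1 := by
  rw [h.sub_eq_fract hj]
  exact Int.fract_lt_one _

theorem one_lt (h : IsCompleteQuotients ξ u c) (hξ : Irrational ξ) (hξ1 : 1 < ξ)
    (hj : 0 ≤ j) : 1 < c j := by
  obtain rfl | hj := hj.eq_or_lt
  · rwa [h.zero]
  · have hc := h.succ (j - 1) (by omega)
    rw [sub_add_cancel] at hc
    rw [hc]
    exact one_lt_one_div (h.sub_pos hξ (by omega)) (h.sub_lt_one (by omega))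

theorem one_le_partial (h : IsCompleteQuotients ξ u c) (hξ : Irrational ξ) (hξ1 : 1 < ξ)
    (hj : 0 ≤ j) : 1 ≤ u j := by
  rw [h.partial_eq_floor j hj, Int.le_floor]
  exact_mod_cast (h.one_lt hξ hξ1 hj).le

end IsCompleteQuotients

namespace IsConvergents

variable {u p q : ℤ → ℤ}

theorem num_add_two (h : IsConvergents u p q) {j : ℤ} (hj : -1 ≤ j) :
    p (j + 2) = u (j + 2) * p (j + 1) + p j := by
  simpa [add_assoc, one_add_one_eq_two] using h.num_succ (j + 1) (by omega)

theorem den_add_two (h : IsConvergents u p q) {j : ℤ} (hj : -1 ≤ j) :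
    q (j + 2) = u (j + 2) * q (j + 1) + q j := by
  simpa [add_assoc, one_add_one_eq_two] using h.den_succ (j + 1) (by omega)

theorem det_eq_negOnePow (h : IsConvergents u p q) :
    ∀ j, -1 ≤ j → p j * q (j + 1) - p (j + 1) * q j = (j + 1).negOnePow := by
  refine Int.leInduction ?_ fun j hj ih => ?_
  · simp [h.num_neg_one, h.den_neg_one, h.den_zero]
  · rw [Int.negOnePow_succ, Units.val_neg, ← ih, add_assoc, one_add_one_eq_two, h.num_add_two hj,
      h.den_add_two hj]
    ring

theorem add_mul_pos_and_lt_succ (h : IsConvergents u p q) {ξ : ℝ} (hξ : 0 < ξ)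
    (hu : ∀ j, 0 ≤ j → 1 ≤ u j) :
    ∀ j, -1 ≤ j →
      0 < (p j : ℝ) + q j * ξ ∧ (p j : ℝ) + q j * ξ < p (j + 1) + q (j + 1) * ξ := by
  refine Int.leInduction ?_ fun j hj ⟨hpos, hlt⟩ => ⟨hpos.trans hlt, ?_⟩
  · have hu0 : (1 : ℝ) ≤ u 0 := by exact_mod_cast hu 0 le_rfl
    simp only [neg_add_cancel, h.num_neg_one, h.den_neg_one, h.num_zero, h.den_zero]
    push_cast
    constructor <;> linarith
  · have hu2 : (1 : ℝ) ≤ u (j + 2) := by exact_mod_cast hu (j + 2) (by omega)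
    rw [add_assoc, one_add_one_eq_two, h.num_add_two hj, h.den_add_two hj]
    push_cast
    nlinarith

theorem completeQuotient_mul_sub_mul_eq (h : IsConvergents u p q) {ξ : ℝ} {c : ℤ → ℝ}
    (hc : IsCompleteQuotients ξ u c) (hξ : Irrational ξ) :
    ∀ j, 0 ≤ j → c (j + 1) * (p j - q j * ξ) = -(p (j - 1) - q (j - 1) * ξ) := by
  refine Int.leInduction ?_ fun j hj ih => ?_
  · have hne : ξ - u 0 ≠ 0 := by simpa [hc.zero] using (hc.sub_pos hξ le_rfl).ne'
    rw [zero_sub, h.num_neg_one, h.den_neg_one, h.num_zero, h.den_zero, hc.succ 0 le_rfl, hc.zero]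
    field_simp
    push_cast
    ring
  · have hne := (hc.sub_pos hξ (j := j + 1) (by omega)).ne'
    rw [add_sub_cancel_right, hc.succ (j + 1) (by omega), h.num_succ j hj, h.den_succ j hj]
    push_cast
    field_simp
    linear_combination ih

theorem negOnePow_mul_sub_pos (h : IsConvergents u p q) {ξ : ℝ} {c : ℤ → ℝ}
    (hc : IsCompleteQuotients ξ u c) (hξ : Irrational ξ) (hξ1 : 1 < ξ) :
    ∀ j, -1 ≤ j → 0 < ((j + 1).negOnePow : ℤ) * ((p j : ℝ) - q j * ξ) := by
  refine Int.leInduction ?_ fun j hj ih => ?_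
  · simp [h.num_neg_one, h.den_neg_one]
  · have hrec := h.completeQuotient_mul_sub_mul_eq hc hξ (j + 1) (by omega)
    have hcpos : 0 < c (j + 1 + 1) := zero_lt_one.trans (hc.one_lt hξ hξ1 (by omega))
    rw [add_sub_cancel_right] at hrec
    rw [Int.negOnePow_succ, Units.val_neg, Int.cast_neg]
    refine pos_of_mul_pos_left ?_ hcpos.le
    linear_combination ih + ((j + 1).negOnePow : ℤ) * hrec

theorem sub_mul_neg_of_even (h : IsConvergents u p q) {ξ : ℝ} {c : ℤ → ℝ}
    (hc : IsCompleteQuotients ξ u c) (hξ : Irrational ξ) (hξ1 : 1 < ξ) {j : ℤ} (hj : Even j)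
    (hj0 : 0 ≤ j) : (p j : ℝ) - q j * ξ < 0 := by
  have := h.negOnePow_mul_sub_pos hc hξ hξ1 j (by omega)
  rwa [Int.negOnePow_odd _ hj.add_one, Units.val_neg, Units.val_one, Int.cast_neg, Int.cast_one,
    neg_one_mul, neg_pos] at this

theorem det_eq_one_of_odd (h : IsConvergents u p q) {i : ℤ} (hi : Odd i) (hi1 : -1 ≤ i) :
    p i * q (i + 1) - p (i + 1) * q i = 1 := by
  rw [h.det_eq_negOnePow i hi1, Int.negOnePow_even _ hi.add_one, Units.val_one]

end IsConvergents

theorem Nat.not_isSquare_of_mod_four {D : ℕ} (hD : D % 4 = 2 ∨ D % 4 = 3) : ¬IsSquare D := by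
  rintro ⟨k, rfl⟩
  have hk := Nat.mod_lt k (by norm_num : 4 > 0)
  rcases hD with hD | hD <;> interval_cases hk' : k % 4 <;> simp [Nat.mul_mod, hk'] at hD

theorem Int.exists_eq_mul_add_two_mul_abs_le {B u : ℤ} {N : ℕ} (hN : 0 < N) (hB : 0 < B)
    (hBu : B < u * N) : ∃ r a : ℤ, 0 ≤ r ∧ r ≤ u ∧ 2 * |a| ≤ N ∧ B = r * N + a := by
  have hdiv := Int.bmod_add_bdiv B N
  have hlo : -(N : ℤ) ≤ 2 * B.bmod N := by have := Int.le_bmod (x := B) hN; omega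
  have hhi : 2 * B.bmod N ≤ N := by have := Int.bmod_lt (x := B) hN; omega
  have hN' : (0 : ℤ) < N := by exact_mod_cast hN
  refine ⟨B.bdiv N, B.bmod N, ?_, ?_, ?_, by linarith⟩
  · by_contra! hr
    nlinarith [mul_le_mul_of_nonneg_left (show B.bdiv N ≤ -1 by omega) hN'.le]
  · by_contra! hr
    nlinarith [mul_le_mul_of_nonneg_left (show u + 1 ≤ B.bdiv N by omega) hN'.le]
  · rcases abs_cases (B.bmod N) with ⟨h, -⟩ | ⟨h, -⟩ <;> rw [h] <;> omega

theorem norm_add_mul_mul_norm (D x y x' y' r : ℤ) :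
    ((x + r * x') ^ 2 - D * (y + r * y') ^ 2) * (x' ^ 2 - D * y' ^ 2) =
      (x * x' - D * (y * y') + r * (x' ^ 2 - D * y' ^ 2)) ^ 2 - D * (x * y' - x' * y) ^ 2 := by
  ring

theorem sq_sub_mul_sq_eq_mul_sqrt (D : ℕ) (x y : ℝ) :
    x ^ 2 - D * y ^ 2 = (x + y * √D) * (x - y * √D) := by
  linear_combination y ^ 2 * Real.sq_sqrt (Nat.cast_nonneg (α := ℝ) D)

namespace IsConvergents

variable {D : ℕ} {u p q : ℤ → ℤ} {c : ℤ → ℝ}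

theorem sq_sub_mul_sq_neg (hp : IsConvergents u p q) (hc : IsCompleteQuotients √D u c)
    (hirr : Irrational √D) (h1 : 1 < √(D : ℝ)) {j : ℤ} (hj : Even j) (hj0 : 0 ≤ j) :
    p j ^ 2 - D * q j ^ 2 < 0 := by
  have hα := (hp.add_mul_pos_and_lt_succ (zero_lt_one.trans h1)
    (fun k hk => hc.one_le_partial hirr h1 hk) j (by omega)).1
  have hR : (p j : ℝ) ^ 2 - D * (q j : ℝ) ^ 2 < 0 := by
    rw [sq_sub_mul_sq_eq_mul_sqrt]
    exact mul_neg_of_pos_of_neg hα (hp.sub_mul_neg_of_even hc hirr h1 hj hj0)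
  exact_mod_cast hR

theorem trace_add_sqrt_eq (hp : IsConvergents u p q) (hc : IsCompleteQuotients √D u c)
    (hirr : Irrational √D) {i : ℤ} (hi : Odd i) (hi1 : -1 ≤ i) {N : ℤ}
    (hM : p (i + 1) ^ 2 - D * q (i + 1) ^ 2 = -N) :
    p i * p (i + 1) - D * (q i * q (i + 1)) + √D = c (i + 2) * N := by
  have hs : √(D : ℝ) ^ 2 = D := Real.sq_sqrt (Nat.cast_nonneg _)
  have hrec := hp.completeQuotient_mul_sub_mul_eq hc hirr (i + 1) (by omega)
  rw [add_sub_cancel_right, add_assoc, one_add_one_eq_two] at hrec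
  have hdet : (p i : ℝ) * q (i + 1) - p (i + 1) * q i = 1 := by
    exact_mod_cast hp.det_eq_one_of_odd hi hi1
  have hMR : ((p (i + 1) : ℝ) + q (i + 1) * √D) * (p (i + 1) - q (i + 1) * √D) = -N := by
    rw [← sq_sub_mul_sq_eq_mul_sqrt]
    exact_mod_cast hM
  linear_combination -√D * hdet + (q i * q (i + 1) : ℝ) * hs
    + (p (i + 1) + q (i + 1) * √D : ℝ) * hrec - c (i + 2) * hMR

theorem trace_pos_and_lt_mul (hp : IsConvergents u p q) (hc : IsCompleteQuotients √D u c)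
    (hirr : Irrational √D) (h1 : 1 < √(D : ℝ)) {i : ℤ} (hi : Odd i) (hi1 : -1 ≤ i) {N : ℤ}
    (hM : p (i + 1) ^ 2 - D * q (i + 1) ^ 2 = -N) :
    0 < p i * p (i + 1) - D * (q i * q (i + 1)) ∧
      p i * p (i + 1) - D * (q i * q (i + 1)) < u (i + 2) * N := by
  have hs : √(D : ℝ) ^ 2 = D := Real.sq_sqrt (Nat.cast_nonneg _)
  have hdet : (p i : ℝ) * q (i + 1) - p (i + 1) * q i = 1 := by
    exact_mod_cast hp.det_eq_one_of_odd hi hi1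
  have hmono := hp.add_mul_pos_and_lt_succ (zero_lt_one.trans h1)
    (fun k hk => hc.one_le_partial hirr h1 hk)
  have hα01 := (hmono i hi1).2
  have hα12 := (hmono (i + 1) (by omega)).2
  rw [add_assoc, one_add_one_eq_two] at hα12
  have hβ := hp.sub_mul_neg_of_even hc hirr h1 hi.add_one (by omega)
  have hMR : ((p (i + 1) : ℝ) + q (i + 1) * √D) * (p (i + 1) - q (i + 1) * √D) = -N := by
    rw [← sq_sub_mul_sq_eq_mul_sqrt]
    exact_mod_cast hM
  have hN : (0 : ℝ) < N := by
    linarith [mul_neg_of_pos_of_neg (hmono (i + 1) (by omega)).1 hβ]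
  have hplus := hp.trace_add_sqrt_eq hc hirr hi hi1 hM
  have hc1 := hc.one_lt hirr h1 (j := i + 2) (by omega)
  have hc2 := hc.sub_lt_one (j := i + 2) (by omega)
  have hminus0 : p i * p (i + 1) - D * (q i * q (i + 1)) - √D =
      (p i + q i * √D : ℝ) * (p (i + 1) - q (i + 1) * √D) := by
    linear_combination √D * hdet + (q i * q (i + 1) : ℝ) * hs
  have hminus : p i * p (i + 1) - D * (q i * q (i + 1)) - √D - u (i + 2) * N =
      (p (i + 2) + q (i + 2) * √D : ℝ) * (p (i + 1) - q (i + 1) * √D) := by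
    rw [hp.num_add_two hi1, hp.den_add_two hi1]
    push_cast
    linear_combination √D * hdet + (q i * q (i + 1) : ℝ) * hs - u (i + 2) * hMR
  have hcN : (N : ℝ) < c (i + 2) * N := by nlinarith
  have hcuN : (c (i + 2) - u (i + 2)) * N < N := by nlinarith
  have hlow := mul_lt_mul_of_neg_right hα01 hβ
  have hhigh := mul_lt_mul_of_neg_right hα12 hβ
  have hR : (0 : ℝ) < p i * p (i + 1) - D * (q i * q (i + 1)) ∧
      (p i * p (i + 1) - D * (q i * q (i + 1)) : ℝ) < u (i + 2) * N := by
    constructor <;> linarith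
  exact_mod_cast hR

end IsConvergents

theorem stmt16_general (D : ℕ) (hD4 : D % 4 = 2 ∨ D % 4 = 3)
    (u : ℤ → ℤ) (c : ℤ → ℝ)
    (hc0 : c 0 = Real.sqrt D)
    (hu : ∀ i : ℤ, 0 ≤ i → u i = ⌊c i⌋)
    (hcrec : ∀ i : ℤ, 0 ≤ i → c (i + 1) = 1 / (c i - u i))
    (p q : ℤ → ℤ)
    (hpm : p (-1) = 1) (hqm : q (-1) = 0)
    (hp0 : p 0 = u 0) (hq0 : q 0 = 1)
    (hprec : ∀ i : ℤ, 0 ≤ i → p (i + 1) = u (i + 1) * p i + p (i - 1))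
    (hqrec : ∀ i : ℤ, 0 ≤ i → q (i + 1) = u (i + 1) * q i + q (i - 1))
    (N : ℕ) :
    ∀ i : ℤ, Odd i → -1 ≤ i →
      |(p (i + 1)) ^ 2 - (D : ℤ) * (q (i + 1)) ^ 2| = (N : ℤ) →
      ∃ r a : ℤ, 0 ≤ r ∧ r ≤ u (i + 2) ∧ (|a| : ℝ) ≤ (N : ℝ) / 2 ∧
        (((p i : ℝ) + (r : ℝ) * (p (i + 1) : ℝ)) ^ 2 - (D : ℝ) * ((q i : ℝ) + (r : ℝ) * (q (i + 1) : ℝ)) ^ 2) = ((D : ℝ) - (a : ℝ) ^ 2) / (N : ℝ) := by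
  intro i hi hi1 hNi
  have hirr : Irrational √(D : ℝ) :=
    irrational_sqrt_natCast_iff.mpr (Nat.not_isSquare_of_mod_four hD4)
  have h1 : 1 < √(D : ℝ) := by
    rw [Real.lt_sqrt zero_le_one, one_pow, Nat.one_lt_cast]
    omega
  have hc : IsCompleteQuotients √D u c := ⟨hc0, hu, hcrec⟩
  have hp : IsConvergents u p q := ⟨hpm, hqm, hp0, hq0, hprec, hqrec⟩
  have hneg := hp.sq_sub_mul_sq_neg hc hirr h1 hi.add_one (by omega)
  rw [abs_of_neg hneg] at hNi
  have hM : p (i + 1) ^ 2 - D * q (i + 1) ^ 2 = -N := by omega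
  have hN : 0 < N := by omega
  obtain ⟨hB0, hBu⟩ := hp.trace_pos_and_lt_mul hc hirr h1 hi hi1 hM
  obtain ⟨r, a, hr0, hru, ha, hB⟩ := Int.exists_eq_mul_add_two_mul_abs_le hN hB0 hBu
  refine ⟨r, a, hr0, hru, ?_, ?_⟩
  · have : 2 * |(a : ℝ)| ≤ N := by exact_mod_cast ha
    linarith
  · have key := norm_add_mul_mul_norm D (p i) (q i) (p (i + 1)) (q (i + 1)) r
    rw [hM, hp.det_eq_one_of_odd hi hi1, hB] at key
    have hZ :
        ((p i + r * p (i + 1)) ^ 2 - D * (q i + r * q (i + 1)) ^ 2) * (N : ℤ) = D - a ^ 2 := by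
      linear_combination -key
    rw [eq_div_iff (by positivity : (N : ℝ) ≠ 0)]
    exact_mod_cast hZ

theorem stmt16 (D : ℕ) (hDsf : Squarefree D) (hD4 : D % 4 = 2 ∨ D % 4 = 3)
    (u : ℤ → ℤ) (c : ℤ → ℝ)
    (hc0 : c 0 = Real.sqrt D)
    (hu : ∀ i : ℤ, 0 ≤ i → u i = ⌊c i⌋)
    (hcrec : ∀ i : ℤ, 0 ≤ i → c (i + 1) = 1 / (c i - u i))
    (p q : ℤ → ℤ)
    (hpm : p (-1) = 1) (hqm : q (-1) = 0)
    (hp0 : p 0 = u 0) (hq0 : q 0 = 1)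
    (hprec : ∀ i : ℤ, 0 ≤ i → p (i + 1) = u (i + 1) * p i + p (i - 1))
    (hqrec : ∀ i : ℤ, 0 ≤ i → q (i + 1) = u (i + 1) * q i + q (i - 1))
    (N : ℕ)
    (hN : IsLeast {n : ℕ | 0 < n ∧ ∃ a b : ℤ, a ^ 2 - (D : ℤ) * b ^ 2 = -(n : ℤ)} N) :
    ∀ i : ℤ, Odd i → -1 ≤ i →
      |(p (i + 1)) ^ 2 - (D : ℤ) * (q (i + 1)) ^ 2| = (N : ℤ) →
      ∃ r a : ℤ, 0 ≤ r ∧ r ≤ u (i + 2) ∧ (|a| : ℝ) ≤ (N : ℝ) / 2 ∧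
        (((p i : ℝ) + (r : ℝ) * (p (i + 1) : ℝ)) ^ 2 - (D : ℝ) * ((q i : ℝ) + (r : ℝ) * (q (i + 1) : ℝ)) ^ 2) = ((D : ℝ) - (a : ℝ) ^ 2) / (N : ℝ) :=
  stmt16_general D hD4 u c hc0 hu hcrec p q hpm hqm hp0 hq0 hprec hqrec N
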